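/- Let m, n be positive integers, r = min(m,n), Ω ⊆ {1,…,m}×{1,…,n}, X a real m×n matrix, σ > 0 and λ > 0. Suppose Z† minimizes F(Z) := (1/(2σ²))·Σ_{(i,j)∈Ω}(X_{ij} − Z_{ij})² + λ‖Z‖_* over all real m×n matrices Z. Then there exist d† ∈ ℝ^r with d†_k ≥ 0 and vectors α†_k ∈ ℝ^m, β†_k ∈ ℝ^n with ‖α†_k‖₂ ≤ 1 and ‖β†_k‖₂ ≤ 1 for all k, such that Z† = Σ_{k=1}^r d†_k α†_k (β†_k)ᵀ and (d†, α†, β†) minimizes G(d,α,β) := (1/(2σ²))·Σ_{(i,j)∈Ω}(X_{ij} − (Σ_{k=1}^r d_k α_k β_kᵀ)_{ij})² + λ·Σ_{k=1}^r d_k over all feasible tuples. (Theorem 1, transfer of optimal solutions from P1 to P2.) -/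

import Mathlib

open scoped BigOperators

/-- The nuclear norm of a real matrix: the sum of the square roots of the
eigenvalues of `Zᵀ * Z` (i.e. the sum of the singular values of `Z`). -/
noncomputable def nuclearNorm {m n : ℕ} (Z : Matrix (Fin m) (Fin n) ℝ) : ℝ :=
  ∑ j, Real.sqrt ((show (Z.transpose * Z).IsHermitian by
    simpa [Matrix.conjTranspose_eq_transpose_of_trivial] using
      Matrix.isHermitian_conjTranspose_mul_self Z).eigenvalues j)

/-- The Euclidean (ℓ²) norm of a vector in `ℝ^m`. -/
noncomputable def l2norm {m : ℕ} (x : Fin m → ℝ) : ℝ := Real.sqrt (∑ i, x i ^ 2)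

/-- `∑ k, d k • (α k) (β k)ᵀ`, a sum of scaled rank-one matrices. -/
noncomputable def rankOneSum {m n r : ℕ} (d : Fin r → ℝ) (α : Fin r → Fin m → ℝ)
    (β : Fin r → Fin n → ℝ) : Matrix (Fin m) (Fin n) ℝ :=
  ∑ k, d k • Matrix.vecMulVec (α k) (β k)

/-!
Let `Z† = ∑ⱼ sⱼ uⱼ vⱼᵀ` be a singular value decomposition obtained from an orthonormal eigenbasis
`vⱼ` of `Z†ᵀ Z†`, with `sⱼ = ‖Z† vⱼ‖` and `uⱼ = Z† vⱼ / sⱼ`. Only `rank Z† ≤ min m n` of the `sⱼ`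
are nonzero, so padding with zero terms gives a feasible tuple for `G` whose value is `F Z†`.
Conversely, for a feasible tuple with `M = ∑ₖ dₖ αₖ βₖᵀ` and the singular vectors of `M`,
`‖M‖_* = ∑ⱼ uⱼᵀ M vⱼ = ∑ₖ dₖ ∑ⱼ (uⱼ ⬝ αₖ)(βₖ ⬝ vⱼ) ≤ ∑ₖ dₖ`
by Cauchy–Schwarz and Bessel's inequality, hence `G d α β ≥ F M ≥ F Z†`.
-/

open Matrix WithLp
open scoped InnerProductSpace

section Bessel

variable {ι E F : Type*} [Fintype ι] [NormedAddCommGroup E] [InnerProductSpace ℝ E]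
  [NormedAddCommGroup F] [InnerProductSpace ℝ F]

theorem Orthonormal.sqrt_sum_inner_sq_le {u : ι → E} (hu : Orthonormal ℝ u) (a : E) :
    √(∑ j, ⟪u j, a⟫_ℝ ^ 2) ≤ ‖a‖ := by
  refine Real.sqrt_le_iff.mpr ⟨norm_nonneg a, ?_⟩
  simpa only [Real.norm_eq_abs, sq_abs] using hu.sum_inner_products_le a (s := Finset.univ)

theorem Orthonormal.sum_inner_mul_inner_le {u : ι → E} {v : ι → F} (hu : Orthonormal ℝ u)
    (hv : Orthonormal ℝ v) (a : E) (b : F) :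
    ∑ j, ⟪u j, a⟫_ℝ * ⟪v j, b⟫_ℝ ≤ ‖a‖ * ‖b‖ :=
  (Real.sum_mul_le_sqrt_mul_sqrt _ _ _).trans <| mul_le_mul (hu.sqrt_sum_inner_sq_le a)
    (hv.sqrt_sum_inner_sq_le b) (Real.sqrt_nonneg _) (norm_nonneg a)

end Bessel

lemma real_inner_toLp_toLp {ι : Type*} [Fintype ι] (x y : ι → ℝ) :
    ⟪toLp 2 x, toLp 2 y⟫_ℝ = x ⬝ᵥ y := by
  rw [EuclideanSpace.inner_toLp_toLp, star_trivial, dotProduct_comm]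

lemma l2norm_eq_norm_toLp {m : ℕ} (x : Fin m → ℝ) : l2norm x = ‖toLp 2 x‖ := by
  simp [l2norm, EuclideanSpace.norm_eq, Real.norm_eq_abs, sq_abs]

section RankOneSum

variable {ι κ K : Type*} [Fintype ι] [Fintype κ] [Fintype K]

lemma dotProduct_sum_vecMulVec_mulVec (d : K → ℝ) (α : K → ι → ℝ) (β : K → κ → ℝ)
    (x : ι → ℝ) (y : κ → ℝ) :
    x ⬝ᵥ ((∑ k, d k • vecMulVec (α k) (β k)) *ᵥ y) = ∑ k, d k * ((x ⬝ᵥ α k) * (β k ⬝ᵥ y)) := by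
  simp only [Matrix.sum_mulVec, smul_mulVec, vecMulVec_mulVec, dotProduct_sum, dotProduct_smul]
  exact Finset.sum_congr rfl fun k _ => by rw [op_smul_eq_smul, smul_eq_mul, smul_eq_mul]; ring

theorem sum_dotProduct_mulVec_le {S : Type*} [Fintype S] {u : S → ι → ℝ} {v : S → κ → ℝ}
    (hu : Orthonormal ℝ fun j => toLp 2 (u j)) (hv : Orthonormal ℝ fun j => toLp 2 (v j))
    {d : K → ℝ} {α : K → ι → ℝ} {β : K → κ → ℝ} (hd : ∀ k, 0 ≤ d k)
    (hα : ∀ k, ‖toLp 2 (α k)‖ ≤ 1) (hβ : ∀ k, ‖toLp 2 (β k)‖ ≤ 1) :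
    ∑ j, u j ⬝ᵥ ((∑ k, d k • vecMulVec (α k) (β k)) *ᵥ v j) ≤ ∑ k, d k := by
  have hk (k : K) : ∑ j, (u j ⬝ᵥ α k) * (β k ⬝ᵥ v j) ≤ 1 := by
    have := hu.sum_inner_mul_inner_le hv (toLp 2 (α k)) (toLp 2 (β k))
    simp only [real_inner_toLp_toLp, dotProduct_comm (v _)] at this
    exact this.trans (mul_le_one₀ (hα k) (norm_nonneg _) (hβ k))
  calc ∑ j, u j ⬝ᵥ ((∑ k, d k • vecMulVec (α k) (β k)) *ᵥ v j)
      = ∑ k, d k * ∑ j, (u j ⬝ᵥ α k) * (β k ⬝ᵥ v j) := by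
        simp only [dotProduct_sum_vecMulVec_mulVec, Finset.mul_sum]
        exact Finset.sum_comm
    _ ≤ ∑ k, d k * 1 := Finset.sum_le_sum fun k _ => mul_le_mul_of_nonneg_left (hk k) (hd k)
    _ = ∑ k, d k := by simp only [mul_one]

end RankOneSum

lemma isHermitian_transpose_mul_self {ι κ : Type*} [Fintype ι] (Z : Matrix ι κ ℝ) :
    (Zᵀ * Z).IsHermitian := by
  simpa [conjTranspose_eq_transpose_of_trivial] using isHermitian_conjTranspose_mul_self Z

section SingularValueDecomposition

variable {ι κ : Type*} [Fintype ι] [Fintype κ] [DecidableEq κ] (Z : Matrix ι κ ℝ)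

noncomputable def singularValue (j : κ) : ℝ :=
  √((isHermitian_transpose_mul_self Z).eigenvalues j)

noncomputable def rightSingularVector (j : κ) : κ → ℝ :=
  ⇑((isHermitian_transpose_mul_self Z).eigenvectorBasis j)

/-- Since `0⁻¹ = 0`, this is `0` when `singularValue Z j = 0`. -/
noncomputable def leftSingularVector (j : κ) : ι → ℝ :=
  (singularValue Z j)⁻¹ • (Z *ᵥ rightSingularVector Z j)

lemma singularValue_nonneg (j : κ) : 0 ≤ singularValue Z j := Real.sqrt_nonneg _

lemma sq_singularValue (j : κ) :
    singularValue Z j ^ 2 = (isHermitian_transpose_mul_self Z).eigenvalues j :=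
  Real.sq_sqrt (eigenvalues_conjTranspose_mul_self_nonneg Z j)

lemma orthonormal_rightSingularVector :
    Orthonormal ℝ fun j => toLp 2 (rightSingularVector Z j) := by
  simp [rightSingularVector, (isHermitian_transpose_mul_self Z).eigenvectorBasis.orthonormal]

lemma mulVec_dotProduct_mulVec_rightSingularVector (i j : κ) :
    (Z *ᵥ rightSingularVector Z i) ⬝ᵥ (Z *ᵥ rightSingularVector Z j) =
      if i = j then singularValue Z j ^ 2 else 0 := by
  have hv := orthonormal_iff_ite.mp (orthonormal_rightSingularVector Z) i j
  rw [real_inner_toLp_toLp] at hv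
  have hj : (Zᵀ * Z) *ᵥ rightSingularVector Z j =
      (isHermitian_transpose_mul_self Z).eigenvalues j • rightSingularVector Z j :=
    (isHermitian_transpose_mul_self Z).mulVec_eigenvectorBasis j
  rw [← vecMul_transpose, ← dotProduct_mulVec, mulVec_mulVec, hj, dotProduct_smul, hv,
    sq_singularValue]
  simp

lemma mulVec_rightSingularVector (j : κ) :
    Z *ᵥ rightSingularVector Z j = singularValue Z j • leftSingularVector Z j := by
  rcases eq_or_ne (singularValue Z j) 0 with h | h
  · rw [h, zero_smul, ← dotProduct_self_eq_zero, mulVec_dotProduct_mulVec_rightSingularVector,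
      if_pos rfl, h, sq, zero_mul]
  · rw [leftSingularVector, smul_smul, mul_inv_cancel₀ h, one_smul]

lemma leftSingularVector_dotProduct_mulVec (j : κ) :
    leftSingularVector Z j ⬝ᵥ (Z *ᵥ rightSingularVector Z j) = singularValue Z j := by
  rw [leftSingularVector, smul_dotProduct, mulVec_dotProduct_mulVec_rightSingularVector, if_pos rfl,
    smul_eq_mul, inv_mul_eq_div, sq, mul_self_div_self]

lemma orthonormal_leftSingularVector :
    Orthonormal ℝ fun j : {j // singularValue Z j ≠ 0} => toLp 2 (leftSingularVector Z j) := by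
  rw [orthonormal_iff_ite]
  rintro ⟨i, hi⟩ ⟨j, hj⟩
  simp only [real_inner_toLp_toLp, leftSingularVector, smul_dotProduct, dotProduct_smul,
    mulVec_dotProduct_mulVec_rightSingularVector, Subtype.mk.injEq, smul_eq_mul]
  split_ifs with hij
  · subst hij
    field_simp
  · simp

lemma sum_vecMulVec_rightSingularVector :
    ∑ j, vecMulVec (rightSingularVector Z j) (rightSingularVector Z j) = 1 := by
  have hU := mem_unitaryGroup_iff.mp (isHermitian_transpose_mul_self Z).eigenvectorUnitary.2
  ext i l
  simpa [mul_apply, Matrix.sum_apply, vecMulVec_apply, rightSingularVector] using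
    congrFun (congrFun hU i) l

lemma sum_singularValue_smul_vecMulVec :
    ∑ j, singularValue Z j • vecMulVec (leftSingularVector Z j) (rightSingularVector Z j) = Z := by
  simp_rw [← smul_vecMulVec, ← mulVec_rightSingularVector, ← mul_vecMulVec, ← Matrix.mul_sum,
    sum_vecMulVec_rightSingularVector, Matrix.mul_one]

lemma card_singularValue_ne_zero :
    Fintype.card {j // singularValue Z j ≠ 0} = Z.rank := by
  rw [← rank_transpose_mul_self, (isHermitian_transpose_mul_self Z).rank_eq_card_non_zero_eigs]
  exact Fintype.card_congr <| Equiv.subtypeEquivRight fun j =>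
    Real.sqrt_ne_zero (eigenvalues_conjTranspose_mul_self_nonneg Z j)

end SingularValueDecomposition

lemma Fintype.sum_subtype_of_ne {ι M : Type*} [Fintype ι] [AddCommMonoid M] {p : ι → Prop}
    [DecidablePred p] {f : ι → M} (hf : ∀ i, f i ≠ 0 → p i) :
    ∑ i : {i // p i}, f i = ∑ i, f i := by
  rw [← Finset.sum_filter_of_ne fun i _ => hf i, ← Finset.sum_subtype_eq_sum_filter,
    Finset.subtype_univ]

section Extend

open Function

variable {S T M : Type*} {e : S → T}

lemma Function.extend_zero_induction [Zero M] {p : M → Prop} {f : S → M} (h0 : p 0)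
    (hf : ∀ s, p (f s)) (t : T) : p (extend e f 0 t) := by
  unfold extend
  split_ifs
  exacts [hf _, h0]

variable [Fintype S]

lemma Function.Injective.sum_extend_zero [Fintype T] [AddCommMonoid M] (he : e.Injective)
    (f : S → M) : ∑ t, extend e f 0 t = ∑ s, f s := by
  classical
  rw [← Finset.sum_subset (Finset.subset_univ (Finset.univ.map ⟨e, he⟩)), Finset.sum_map]
  · exact Finset.sum_congr rfl fun s _ => he.extend_apply f 0 s
  · intro t _ ht
    refine extend_apply' _ _ _ fun ⟨s, hs⟩ => ht ?_
    simp [← hs]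

lemma Function.Injective.rankOneSum_extend_zero {m n r : ℕ} {e : S → Fin r} (he : e.Injective)
    (d : S → ℝ) (α : S → Fin m → ℝ) (β : S → Fin n → ℝ) :
    rankOneSum (extend e d 0) (extend e α 0) (extend e β 0) =
      ∑ s, d s • vecMulVec (α s) (β s) := by
  rw [rankOneSum, ← he.sum_extend_zero]
  refine Finset.sum_congr rfl fun k _ => ?_
  by_cases hk : ∃ s, e s = k
  · obtain ⟨s, rfl⟩ := hk
    simp only [he.extend_apply]
  · simp only [extend_apply' _ _ _ hk, Pi.zero_apply, zero_smul]

end Extend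

theorem exists_rankOneSum_eq_nuclearNorm {m n r : ℕ} (hr : min m n ≤ r)
    (Z : Matrix (Fin m) (Fin n) ℝ) :
    ∃ (d : Fin r → ℝ) (α : Fin r → Fin m → ℝ) (β : Fin r → Fin n → ℝ),
      (∀ k, 0 ≤ d k) ∧ (∀ k, l2norm (α k) ≤ 1) ∧ (∀ k, l2norm (β k) ≤ 1) ∧
      Z = rankOneSum d α β ∧ ∑ k, d k = nuclearNorm Z := by
  obtain ⟨e⟩ : Nonempty ({j // singularValue Z j ≠ 0} ↪ Fin r) := by
    refine Function.Embedding.nonempty_of_card_le ?_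
    rw [card_singularValue_ne_zero, Fintype.card_fin]
    exact (le_min (rank_le_height Z) (rank_le_width Z)).trans hr
  refine ⟨Function.extend e (fun j => singularValue Z j) 0,
    Function.extend e (fun j => leftSingularVector Z j) 0,
    Function.extend e (fun j => rightSingularVector Z j) 0, ?_, ?_, ?_, ?_, ?_⟩
  · exact Function.extend_zero_induction le_rfl fun j => singularValue_nonneg Z j
  · refine Function.extend_zero_induction (p := (l2norm · ≤ 1)) (by simp [l2norm]) fun j => ?_
    rw [l2norm_eq_norm_toLp, (orthonormal_leftSingularVector Z).1 j]
  · refine Function.extend_zero_induction (p := (l2norm · ≤ 1)) (by simp [l2norm]) fun j => ?_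
    rw [l2norm_eq_norm_toLp, (orthonormal_rightSingularVector Z).1 j]
  · rw [e.injective.rankOneSum_extend_zero]
    exact (sum_singularValue_smul_vecMulVec Z).symm.trans
      (Fintype.sum_subtype_of_ne fun j h => left_ne_zero_of_smul h).symm
  · rw [e.injective.sum_extend_zero]
    exact Fintype.sum_subtype_of_ne fun j h => h

theorem nuclearNorm_rankOneSum_le {m n r : ℕ} {d : Fin r → ℝ} {α : Fin r → Fin m → ℝ}
    {β : Fin r → Fin n → ℝ} (hd : ∀ k, 0 ≤ d k) (hα : ∀ k, l2norm (α k) ≤ 1)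
    (hβ : ∀ k, l2norm (β k) ≤ 1) :
    nuclearNorm (rankOneSum d α β) ≤ ∑ k, d k := by
  set M := rankOneSum d α β
  calc nuclearNorm M = ∑ j : {j // singularValue M j ≠ 0}, singularValue M j :=
        (Fintype.sum_subtype_of_ne fun j => mt fun h => h).symm
    _ = ∑ j : {j // singularValue M j ≠ 0},
          leftSingularVector M j ⬝ᵥ (M *ᵥ rightSingularVector M j) := by
        simp only [leftSingularVector_dotProduct_mulVec]
    _ ≤ ∑ k, d k := sum_dotProduct_mulVec_le (orthonormal_leftSingularVector M)
        ((orthonormal_rightSingularVector M).comp _ Subtype.val_injective) hd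
        (fun k => l2norm_eq_norm_toLp (α k) ▸ hα k) (fun k => l2norm_eq_norm_toLp (β k) ▸ hβ k)

theorem optimal_solution_transfer_P1_to_P2_general
    (m n : ℕ) (r : ℕ) (hr : r = min m n)
    (Ω : Finset (Fin m × Fin n)) (X : Matrix (Fin m) (Fin n) ℝ)
    (σ lam : ℝ) (hlam : 0 < lam)
    (F : Matrix (Fin m) (Fin n) ℝ → ℝ)
    (hF : ∀ Z, F Z = (1 / (2 * σ ^ 2)) * ∑ p ∈ Ω, (X p.1 p.2 - Z p.1 p.2) ^ 2
        + lam * nuclearNorm Z)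
    (G : (Fin r → ℝ) → (Fin r → Fin m → ℝ) → (Fin r → Fin n → ℝ) → ℝ)
    (hG : ∀ d α β, G d α β =
        (1 / (2 * σ ^ 2)) * ∑ p ∈ Ω, (X p.1 p.2 - rankOneSum d α β p.1 p.2) ^ 2
        + lam * ∑ k, d k)
    (Zdag : Matrix (Fin m) (Fin n) ℝ)
    (hmin : ∀ Z : Matrix (Fin m) (Fin n) ℝ, F Zdag ≤ F Z) :
    ∃ (ddag : Fin r → ℝ) (αdag : Fin r → Fin m → ℝ) (βdag : Fin r → Fin n → ℝ),
      (∀ k, 0 ≤ ddag k) ∧ (∀ k, l2norm (αdag k) ≤ 1) ∧ (∀ k, l2norm (βdag k) ≤ 1) ∧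
      Zdag = rankOneSum ddag αdag βdag ∧
      (∀ (d : Fin r → ℝ) (α : Fin r → Fin m → ℝ) (β : Fin r → Fin n → ℝ),
        (∀ k, 0 ≤ d k) → (∀ k, l2norm (α k) ≤ 1) → (∀ k, l2norm (β k) ≤ 1) →
        G ddag αdag βdag ≤ G d α β) := by
  obtain ⟨d₀, α₀, β₀, hd₀, hα₀, hβ₀, hZ, hsum⟩ := exists_rankOneSum_eq_nuclearNorm hr.ge Zdag
  refine ⟨d₀, α₀, β₀, hd₀, hα₀, hβ₀, hZ, fun d α β hd hα hβ => ?_⟩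
  calc G d₀ α₀ β₀ = F Zdag := by rw [hG, hF, ← hZ, hsum]
    _ ≤ F (rankOneSum d α β) := hmin _
    _ ≤ G d α β := by
      rw [hF, hG]
      gcongr
      exact nuclearNorm_rankOneSum_le hd hα hβ

theorem optimal_solution_transfer_P1_to_P2
    (m n : ℕ) (hm : 0 < m) (hn : 0 < n) (r : ℕ) (hr : r = min m n)
    (Ω : Finset (Fin m × Fin n)) (X : Matrix (Fin m) (Fin n) ℝ)
    (σ lam : ℝ) (hσ : 0 < σ) (hlam : 0 < lam)
    (F : Matrix (Fin m) (Fin n) ℝ → ℝ)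
    (hF : ∀ Z, F Z = (1 / (2 * σ ^ 2)) * ∑ p ∈ Ω, (X p.1 p.2 - Z p.1 p.2) ^ 2
        + lam * nuclearNorm Z)
    (G : (Fin r → ℝ) → (Fin r → Fin m → ℝ) → (Fin r → Fin n → ℝ) → ℝ)
    (hG : ∀ d α β, G d α β =
        (1 / (2 * σ ^ 2)) * ∑ p ∈ Ω, (X p.1 p.2 - rankOneSum d α β p.1 p.2) ^ 2
        + lam * ∑ k, d k)
    (Zdag : Matrix (Fin m) (Fin n) ℝ)
    (hmin : ∀ Z : Matrix (Fin m) (Fin n) ℝ, F Zdag ≤ F Z) :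
    ∃ (ddag : Fin r → ℝ) (αdag : Fin r → Fin m → ℝ) (βdag : Fin r → Fin n → ℝ),
      (∀ k, 0 ≤ ddag k) ∧ (∀ k, l2norm (αdag k) ≤ 1) ∧ (∀ k, l2norm (βdag k) ≤ 1) ∧
      Zdag = rankOneSum ddag αdag βdag ∧
      (∀ (d : Fin r → ℝ) (α : Fin r → Fin m → ℝ) (β : Fin r → Fin n → ℝ),
        (∀ k, 0 ≤ d k) → (∀ k, l2norm (α k) ≤ 1) → (∀ k, l2norm (β k) ≤ 1) →
        G ddag αdag βdag ≤ G d α β) :=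
  optimal_solution_transfer_P1_to_P2_general m n r hr Ω X σ lam hlam F hF G hG Zdag hmin
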